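/- Every element of a right-angled Artin group A(Γ) admits a left-greedy clique word decomposition: a reduced expression g = w_k ⋯ w_1 where each w_i is a clique word (supported on pairwise adjacent vertices) and for each i < k and each vertex v in supp(w_i) there exists a vertex v' in supp(w_{i+1}) with v and v' non-adjacent and distinct (i.e., [v,v'] ≠ 1). -/

import Mathlib

open Set

/-- The set of commutator relators of the right-angled Artin group on `Γ`. -/
def raagRels {V : Type} (Γ : SimpleGraph V) : Set (FreeGroup V) :=
  {w | ∃ u v : V, Γ.Adj u v ∧
    w = FreeGroup.of u * FreeGroup.of v * (FreeGroup.of u)⁻¹ * (FreeGroup.of v)⁻¹}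

/-- The right-angled Artin group on a graph `Γ`. -/
abbrev RAAG {V : Type} (Γ : SimpleGraph V) : Type := PresentedGroup (raagRels Γ)
/-- The element of `A(Γ)` represented by a word in the generators and their
formal inverses. -/
def wordProd {V : Type} (Γ : SimpleGraph V) (l : List (V × Bool)) : RAAG Γ :=
  (l.map fun p => if p.2 then (PresentedGroup.of p.1 : RAAG Γ)
    else (PresentedGroup.of p.1 : RAAG Γ)⁻¹).prod

namespace LeftGreedyAux

variable {V : Type} (Γ : SimpleGraph V)

/-- The group element of a single letter. -/
def gen (p : V × Bool) : RAAG Γ :=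
  if p.2 then (PresentedGroup.of p.1 : RAAG Γ) else (PresentedGroup.of p.1 : RAAG Γ)⁻¹

lemma wordProd_eq_prod (l : List (V × Bool)) :
    wordProd Γ l = (l.map (gen Γ)).prod := rfl

lemma wordProd_nil : wordProd Γ [] = 1 := rfl

lemma wordProd_append (l₁ l₂ : List (V × Bool)) :
    wordProd Γ (l₁ ++ l₂) = wordProd Γ l₁ * wordProd Γ l₂ := by
  simp [wordProd_eq_prod]

lemma wordProd_singleton (p : V × Bool) : wordProd Γ [p] = gen Γ p := by
  simp [wordProd_eq_prod]

lemma wordProd_eq_mk (l : List (V × Bool)) :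
    wordProd Γ l = PresentedGroup.mk (raagRels Γ) (FreeGroup.mk l) := by
  induction l with
  | nil =>
      have : FreeGroup.mk ([] : List (V × Bool)) = 1 := rfl
      simp [wordProd_nil, this]
  | cons p l ih =>
      have h1 : FreeGroup.mk (p :: l) = FreeGroup.mk [p] * FreeGroup.mk l := by
        rw [FreeGroup.mul_mk]; rfl
      have h2 : wordProd Γ (p :: l) = wordProd Γ [p] * wordProd Γ l :=
        wordProd_append Γ [p] l
      rw [h2, h1, map_mul, ← ih, wordProd_singleton]
      congr 1
      obtain ⟨u, b⟩ := p
      cases b with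
      | true => rfl
      | false =>
          have hF : FreeGroup.mk [(u, false)] = (FreeGroup.of u)⁻¹ := by
            have h3 : (FreeGroup.mk [(u, true)])⁻¹ = FreeGroup.mk [(u, false)] := by
              rw [FreeGroup.inv_mk]; simp [FreeGroup.invRev]
            have h4 : FreeGroup.of u = FreeGroup.mk [(u, true)] := rfl
            rw [h4]; exact h3.symm
          rw [hF, map_inv]
          rfl

lemma adj_commute {u v : V} (h : Γ.Adj u v) :
    Commute (PresentedGroup.of u : RAAG Γ) (PresentedGroup.of v) := by
  have hrel : (FreeGroup.of u * FreeGroup.of v * (FreeGroup.of u)⁻¹ * (FreeGroup.of v)⁻¹)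
      ∈ Subgroup.normalClosure (raagRels Γ) :=
    Subgroup.subset_normalClosure ⟨u, v, h, rfl⟩
  have h1 : (PresentedGroup.of u * PresentedGroup.of v * (PresentedGroup.of u)⁻¹ *
      (PresentedGroup.of v)⁻¹ : RAAG Γ) = 1 := by
    show PresentedGroup.mk (raagRels Γ) (FreeGroup.of u) *
        PresentedGroup.mk (raagRels Γ) (FreeGroup.of v) *
        (PresentedGroup.mk (raagRels Γ) (FreeGroup.of u))⁻¹ *
        (PresentedGroup.mk (raagRels Γ) (FreeGroup.of v))⁻¹ = 1
    rw [← map_inv, ← map_inv, ← map_mul, ← map_mul, ← map_mul]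
    exact (QuotientGroup.eq_one_iff _).mpr hrel
  have h2 : (PresentedGroup.of u : RAAG Γ) * PresentedGroup.of v * (PresentedGroup.of u)⁻¹
      = PresentedGroup.of v := by
    exact mul_inv_eq_one.mp h1
  unfold Commute SemiconjBy
  calc (PresentedGroup.of u : RAAG Γ) * PresentedGroup.of v
      = (PresentedGroup.of u * PresentedGroup.of v * (PresentedGroup.of u)⁻¹) *
        PresentedGroup.of u := by group
    _ = PresentedGroup.of v * PresentedGroup.of u := by rw [h2]

lemma gen_commute {p q : V × Bool} (h : q.1 = p.1 ∨ Γ.Adj p.1 q.1) :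
    Commute (gen Γ p) (gen Γ q) := by
  have base : Commute (PresentedGroup.of p.1 : RAAG Γ) (PresentedGroup.of q.1) := by
    rcases h with h | h
    · rw [h]
    · exact adj_commute Γ h
  unfold gen
  split_ifs
  · exact base
  · exact base.inv_right
  · exact base.inv_left
  · exact base.inv_left.inv_right

/-- `u` is blocked by the piece `w`. -/
def Blocked (u : V) (w : List (V × Bool)) : Prop :=
  ∃ x ∈ w, x.1 ≠ u ∧ ¬ Γ.Adj u x.1

lemma not_blocked {u : V} {w : List (V × Bool)} (h : ¬ Blocked Γ u w) :
    ∀ x ∈ w, x.1 = u ∨ Γ.Adj u x.1 := by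
  intro x hx
  by_contra hc
  push_neg at hc
  exact h ⟨x, hx, hc.1, hc.2⟩

lemma commute_wordProd {a : V × Bool} {w : List (V × Bool)}
    (h : ¬ Blocked Γ a.1 w) : Commute (gen Γ a) (wordProd Γ w) := by
  rw [wordProd_eq_prod]
  apply Commute.list_prod_right
  intro y hy
  rw [List.mem_map] at hy
  obtain ⟨q, hq, rfl⟩ := hy
  exact gen_commute Γ (not_blocked Γ h q hq)

/-- Greedy relation between consecutive pieces: every letter of the lower
piece is blocked by the upper piece. -/
def Gr (w w' : List (V × Bool)) : Prop := ∀ x ∈ w, Blocked Γ x.1 w'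

lemma blocked_mono {u : V} {w w' : List (V × Bool)} (hsub : ∀ b ∈ w, b ∈ w')
    (h : Blocked Γ u w) : Blocked Γ u w' := by
  obtain ⟨x, hx, h1, h2⟩ := h
  exact ⟨x, hsub x hx, h1, h2⟩

/-- Invariant for a list of pieces (bottom piece first). -/
def Inv (P : List (List (V × Bool))) : Prop :=
  (∀ w ∈ P, w ≠ []) ∧
  (∀ w ∈ P, ∀ x ∈ w, ∀ y ∈ w, x.1 = y.1 ∨ Γ.Adj x.1 y.1) ∧
  List.Chain' (Gr Γ) P

open Classical in
/-- Insert a letter (coming at the right end of the word) into the heap. -/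
noncomputable def ins (a : V × Bool) : List (List (V × Bool)) → List (List (V × Bool))
  | [] => [[a]]
  | [w] => if Blocked Γ a.1 w then [[a], w] else [w ++ [a]]
  | w :: w' :: rest =>
      if Blocked Γ a.1 w then [a] :: w :: w' :: rest
      else if Blocked Γ a.1 w' then (w ++ [a]) :: w' :: rest
      else w :: ins a (w' :: rest)

lemma flat_cons (w : List (V × Bool)) (P : List (List (V × Bool))) :
    (w :: P).reverse.flatten = P.reverse.flatten ++ w := by
  simp

lemma clique_append {a : V × Bool} {w : List (V × Bool)}
    (hcl : ∀ x ∈ w, ∀ y ∈ w, x.1 = y.1 ∨ Γ.Adj x.1 y.1)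
    (h : ¬ Blocked Γ a.1 w) :
    ∀ x ∈ w ++ [a], ∀ y ∈ w ++ [a], x.1 = y.1 ∨ Γ.Adj x.1 y.1 := by
  intro x hx y hy
  rw [List.mem_append, List.mem_singleton] at hx hy
  rcases hx with hx | rfl <;> rcases hy with hy | rfl
  · exact hcl x hx y hy
  · rcases not_blocked Γ h x hx with h1 | h1
    · exact Or.inl h1
    · exact Or.inr h1.symm
  · rcases not_blocked Γ h y hy with h1 | h1
    · exact Or.inl h1.symm
    · exact Or.inr h1
  · exact Or.inl rfl

lemma ins_spec (a : V × Bool) :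
    ∀ P : List (List (V × Bool)), Inv Γ P →
      Inv Γ (ins Γ a P) ∧
      wordProd Γ (ins Γ a P).reverse.flatten
        = wordProd Γ P.reverse.flatten * gen Γ a ∧
      (ins Γ a P).reverse.flatten.length = P.reverse.flatten.length + 1 ∧
      (¬ Blocked Γ a.1 (P.headD []) → ∀ b ∈ P.headD [], b ∈ (ins Γ a P).headD []) := by
  intro P
  induction P with
  | nil =>
      intro _
      have e : ins Γ a [] = [[a]] := by simp [ins]
      rw [e]
      refine ⟨⟨?_, ?_, ?_⟩, ?_, ?_, ?_⟩
      · intro w hw; simp only [List.mem_singleton] at hw; simp [hw]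
      · intro w hw x hx y hy
        simp only [List.mem_singleton] at hw; subst hw
        simp only [List.mem_singleton] at hx hy; subst hx; subst hy
        exact Or.inl rfl
      · exact List.isChain_singleton _
      · simp [flat_cons, wordProd_append, wordProd_singleton, wordProd_nil]
      · simp
      · intro _ b hb; simp at hb
  | cons w rest ih =>
      intro hInv
      obtain ⟨hne, hcl, hch⟩ := hInv
      cases rest with
      | nil =>
          by_cases hb : Blocked Γ a.1 w
          · have e : ins Γ a [w] = [[a], w] := by rw [ins, if_pos hb]
            rw [e]
            refine ⟨⟨?_, ?_, ?_⟩, ?_, ?_, ?_⟩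
            · intro v hv
              simp only [List.mem_cons, List.mem_singleton] at hv
              rcases hv with rfl | rfl | hv
              · simp
              · exact hne v (by simp)
              · simp at hv
            · intro v hv x hx y hy
              simp only [List.mem_cons, List.mem_singleton] at hv
              rcases hv with rfl | rfl | hv
              · simp only [List.mem_singleton] at hx hy; subst hx; subst hy
                exact Or.inl rfl
              · exact hcl v (by simp) x hx y hy
              · simp at hv
            · refine List.isChain_cons_cons.mpr ⟨?_, List.isChain_singleton _⟩
              intro x hx
              simp only [List.mem_singleton] at hx; subst hx; exact hb
            · simp [flat_cons, wordProd_append, wordProd_singleton, wordProd_nil,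
                mul_assoc]
            · simp
            · intro hnb; simp only [List.headD_cons] at hnb; exact absurd hb hnb
          · have e : ins Γ a [w] = [w ++ [a]] := by rw [ins, if_neg hb]
            rw [e]
            refine ⟨⟨?_, ?_, ?_⟩, ?_, ?_, ?_⟩
            · intro v hv; simp only [List.mem_singleton] at hv; simp [hv]
            · intro v hv x hx y hy
              simp only [List.mem_singleton] at hv; subst hv
              exact clique_append Γ (hcl w (by simp)) hb x hx y hy
            · exact List.isChain_singleton _
            · simp [flat_cons, wordProd_append, wordProd_singleton, wordProd_nil,
                mul_assoc]
            · simp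
            · intro _ b hb'
              simp only [List.headD_cons] at hb' ⊢
              exact List.mem_append_left _ hb'
      | cons w' rest' =>
          by_cases hb : Blocked Γ a.1 w
          · have e : ins Γ a (w :: w' :: rest') = [a] :: w :: w' :: rest' := by
              rw [ins, if_pos hb]
            rw [e]
            refine ⟨⟨?_, ?_, ?_⟩, ?_, ?_, ?_⟩
            · intro v hv
              simp only [List.mem_cons] at hv
              rcases hv with rfl | hv
              · simp
              · exact hne v (by simp only [List.mem_cons]; exact hv)
            · intro v hv x hx y hy
              simp only [List.mem_cons] at hv
              rcases hv with rfl | hv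
              · simp only [List.mem_singleton] at hx hy; subst hx; subst hy
                exact Or.inl rfl
              · exact hcl v (by simp only [List.mem_cons]; exact hv) x hx y hy
            · refine List.isChain_cons_cons.mpr ⟨?_, hch⟩
              intro x hx
              simp only [List.mem_singleton] at hx; subst hx; exact hb
            · simp [flat_cons, wordProd_append, wordProd_singleton, mul_assoc]
            · simp [flat_cons]; omega
            · intro hnb; simp only [List.headD_cons] at hnb; exact absurd hb hnb
          · by_cases hb' : Blocked Γ a.1 w'
            · have e : ins Γ a (w :: w' :: rest') = (w ++ [a]) :: w' :: rest' := by
                rw [ins, if_neg hb, if_pos hb']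
              rw [e]
              have hgr : Gr Γ w w' := (List.isChain_cons_cons.mp hch).1
              refine ⟨⟨?_, ?_, ?_⟩, ?_, ?_, ?_⟩
              · intro v hv
                simp only [List.mem_cons] at hv
                rcases hv with rfl | hv
                · simp
                · exact hne v (List.mem_cons_of_mem _ (List.mem_cons.mpr hv))
              · intro v hv x hx y hy
                simp only [List.mem_cons] at hv
                rcases hv with rfl | hv
                · exact clique_append Γ (hcl w (by simp)) hb x hx y hy
                · exact hcl v (List.mem_cons_of_mem _ (List.mem_cons.mpr hv)) x hx y hy
              · refine List.isChain_cons_cons.mpr ⟨?_, (List.isChain_cons_cons.mp hch).2⟩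
                intro x hx
                rw [List.mem_append, List.mem_singleton] at hx
                rcases hx with hx | rfl
                · exact hgr x hx
                · exact hb'
              · simp [flat_cons, wordProd_append, wordProd_singleton, mul_assoc]
              · simp [flat_cons]; omega
              · intro _ b hbw
                simp only [List.headD_cons] at hbw ⊢
                exact List.mem_append_left _ hbw
            · have e : ins Γ a (w :: w' :: rest') = w :: ins Γ a (w' :: rest') := by
                rw [ins, if_neg hb, if_neg hb']
              rw [e]
              have hInvT : Inv Γ (w' :: rest') :=
                ⟨fun v hv => hne v (List.mem_cons_of_mem _ hv),
                 fun v hv => hcl v (List.mem_cons_of_mem _ hv),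
                 (List.isChain_cons_cons.mp hch).2⟩
              obtain ⟨⟨ineT, iclT, ichT⟩, iprod, ilen, ihead⟩ := ih hInvT
              have hsub : ∀ b ∈ w', b ∈ (ins Γ a (w' :: rest')).headD [] := by
                apply ihead
                simpa using hb'
              have hgr : Gr Γ w w' := (List.isChain_cons_cons.mp hch).1
              refine ⟨⟨?_, ?_, ?_⟩, ?_, ?_, ?_⟩
              · intro v hv
                simp only [List.mem_cons] at hv
                rcases hv with rfl | hv
                · exact hne v (by simp)
                · exact ineT v hv
              · intro v hv x hx y hy
                simp only [List.mem_cons] at hv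
                rcases hv with rfl | hv
                · exact hcl v (by simp) x hx y hy
                · exact iclT v hv x hx y hy
              · refine List.isChain_cons.mpr ⟨?_, ichT⟩
                intro h hh
                have hD : (ins Γ a (w' :: rest')).headD [] = h := by
                  rw [List.headD_eq_head?, hh]; rfl
                intro x hx
                exact blocked_mono Γ (hD ▸ hsub) (hgr x hx)
              · calc wordProd Γ (w :: ins Γ a (w' :: rest')).reverse.flatten
                    = wordProd Γ (ins Γ a (w' :: rest')).reverse.flatten *
                      wordProd Γ w := by rw [flat_cons, wordProd_append]
                  _ = wordProd Γ (w' :: rest').reverse.flatten * gen Γ a *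
                      wordProd Γ w := by rw [iprod]
                  _ = wordProd Γ (w' :: rest').reverse.flatten * wordProd Γ w *
                      gen Γ a := by
                        rw [mul_assoc, (commute_wordProd Γ hb).eq, ← mul_assoc]
                  _ = wordProd Γ ((w :: w' :: rest')).reverse.flatten * gen Γ a := by
                        conv_rhs => rw [flat_cons, wordProd_append]
              · rw [flat_cons, flat_cons, List.length_append, List.length_append,
                  ilen]
                omega
              · intro _ b hbw
                simp only [List.headD_cons] at hbw ⊢
                exact hbw

noncomputable def go : List (V × Bool) → List (List (V × Bool))
  | [] => []
  | a :: t => ins Γ a (go t)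

lemma go_spec (l : List (V × Bool)) :
    Inv Γ (go Γ l) ∧
    wordProd Γ (go Γ l).reverse.flatten = wordProd Γ l.reverse ∧
    (go Γ l).reverse.flatten.length = l.length := by
  induction l with
  | nil =>
      refine ⟨⟨?_, ?_, ?_⟩, ?_, ?_⟩
      · intro w hw; simp [go] at hw
      · intro w hw; simp [go] at hw
      · simp [go]; exact List.isChain_nil
      · simp [go]
      · simp [go]
  | cons a t iht =>
      obtain ⟨hInv, hprod, hlen⟩ := iht
      obtain ⟨hInv', hprod', hlen', _⟩ := ins_spec Γ a (go Γ t) hInv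
      have ego : go Γ (a :: t) = ins Γ a (go Γ t) := rfl
      refine ⟨ego ▸ hInv', ?_, ?_⟩
      · rw [ego, hprod', hprod, List.reverse_cons, wordProd_append,
          wordProd_singleton]
      · rw [ego, hlen', hlen]; simp

end LeftGreedyAux

/-- Every element of a right-angled Artin group admits a left-greedy clique
word decomposition `g = w_k ⋯ w_1` (here `w_{i+1}` is the word `L i`, and
the concatenation `w_k ++ ⋯ ++ w_1` is reduced, i.e. of minimal length among
words representing `g`). -/
theorem exists_left_greedy_decomposition {V : Type} [Fintype V]
    (Γ : SimpleGraph V) (g : RAAG Γ) :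
    ∃ (k : ℕ) (L : ℕ → List (V × Bool)),
      -- the concatenation w_k ⋯ w_1 represents g
      wordProd Γ (((List.range k).map L).reverse.flatten) = g ∧
      -- the concatenation is reduced: it has minimal length among all words
      -- representing g
      (∀ m : List (V × Bool), wordProd Γ m = g →
        (((List.range k).map L).reverse.flatten).length ≤ m.length) ∧
      -- each piece is a nonempty clique word: its support spans a clique
      (∀ i < k, L i ≠ []) ∧
      (∀ i < k, ∀ u v : V, (∃ b, (u, b) ∈ L i) → (∃ b, (v, b) ∈ L i) →
        u = v ∨ Γ.Adj u v) ∧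
      -- left-greedy: each vertex in supp(w_i) fails to commute with some
      -- vertex of supp(w_{i+1})
      (∀ i : ℕ, i + 1 < k → ∀ v : V, (∃ b, (v, b) ∈ L i) →
        ∃ v' : V, (∃ b, (v', b) ∈ L (i + 1)) ∧ v ≠ v' ∧ ¬ Γ.Adj v v') := by
  classical
  open LeftGreedyAux in
  obtain ⟨x, hx⟩ := PresentedGroup.mk_surjective (raagRels Γ) g
  have hSne : x.toWord.length ∈ {n | ∃ m : List (V × Bool),
      wordProd Γ m = g ∧ m.length = n} := by
    refine ⟨x.toWord, ?_, rfl⟩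
    rw [LeftGreedyAux.wordProd_eq_mk, FreeGroup.mk_toWord, hx]
  obtain ⟨m₀, hm₀, hlen₀⟩ := Nat.sInf_mem (Set.nonempty_of_mem hSne)
  have hmin : ∀ m : List (V × Bool), wordProd Γ m = g → m₀.length ≤ m.length := by
    intro m hm
    rw [hlen₀]
    exact Nat.sInf_le ⟨m, hm, rfl⟩
  set P := LeftGreedyAux.go Γ m₀.reverse with hP
  obtain ⟨⟨hne, hcl, hch⟩, hprod, hlen⟩ := LeftGreedyAux.go_spec Γ m₀.reverse
  rw [← hP] at hne hcl hch hprod hlen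
  rw [List.reverse_reverse] at hprod
  rw [List.length_reverse] at hlen
  refine ⟨P.length, fun i => P.getD i [], ?_⟩
  have hmap : (List.range P.length).map (fun i => P.getD i []) = P := by
    apply List.ext_getElem
    · simp
    · intro i h1 h2
      simp only [List.getElem_map, List.getElem_range]
      exact List.getD_eq_getElem P [] h2
  rw [hmap]
  have hget : ∀ i (h : i < P.length), P.getD i [] = P.get ⟨i, h⟩ := by
    intro i h
    rw [List.getD_eq_getElem P [] h]
    rfl
  refine ⟨by rw [hprod, hm₀], ?_, ?_, ?_, ?_⟩
  · intro m hm
    rw [hlen]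
    exact hmin m hm
  · intro i hi
    show P.getD i [] ≠ []
    rw [hget i hi]
    exact hne _ (P.get_mem _)
  · intro i hi u v ⟨b, hb⟩ ⟨b', hb'⟩
    have hb : (u, b) ∈ P.getD i [] := hb
    have hb' : (v, b') ∈ P.getD i [] := hb'
    rw [hget i hi] at hb hb'
    exact hcl _ (P.get_mem _) (u, b) hb (v, b') hb'
  · intro i hi v ⟨b, hb⟩
    have hgr := List.isChain_iff_getElem.mp hch i (by omega)
    have hb : (v, b) ∈ P.getD i [] := hb
    rw [hget i (by omega)] at hb
    obtain ⟨x', hx', hx1, hx2⟩ := hgr (v, b) hb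
    refine ⟨x'.1, ⟨x'.2, ?_⟩, hx1.symm, hx2⟩
    show (x'.1, x'.2) ∈ P.getD (i + 1) []
    rw [hget (i + 1) hi]
    simpa using hx'
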